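/- arXiv:2502.10119 — 7 statements merged into one kernel-verified Lean document; each statement's English description precedes it below -/
import Mathlib

section
/- Let E be a real inner product space and let F : E → ℝ be differentiable with gradient ∇F satisfying ‖∇F(u) − ∇F(v)‖ ≤ β‖u − v‖ for all u, v (β-smoothness, β > 0). If in addition F is convex, then for every step size α with 0 ≤ α ≤ 2/β the gradient-descent update is non-expansive: for all u, v ∈ E, ‖(u − α∇F(u)) − (v − α∇F(v))‖ ≤ ‖u − v‖. -/
open RealInnerProductSpace

section helpers
variable {E : Type*} [NormedAddCommGroup E] [InnerProductSpace ℝ E]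

/-- Descent lemma: β-smoothness gives a quadratic upper bound. -/
lemma sewa_descent (F : E → ℝ) (g : E → E) (β : ℝ) (hβ : 0 ≤ β)
    (hdiff : ∀ x : E, HasFDerivAt F ((innerSL ℝ) (g x)) x)
    (hsmooth : ∀ u v : E, ‖g u - g v‖ ≤ β * ‖u - v‖) (u v : E) :
    F v ≤ F u + ⟪g u, v - u⟫ + β / 2 * ‖v - u‖ ^ 2 := by
  set c : ℝ := ⟪g u, v - u⟫ with hc
  set ψ : ℝ → ℝ := fun t => F (u + t • (v - u)) - t * c - β / 2 * ‖v - u‖ ^ 2 * t ^ 2 with hψ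
  have hline : ∀ t : ℝ, HasDerivAt (fun s : ℝ => u + s • (v - u)) (v - u) t := by
    intro t
    have h1 : HasDerivAt (fun s : ℝ => s • (v - u)) ((1 : ℝ) • (v - u)) t :=
      (hasDerivAt_id t).smul_const (v - u)
    simpa using h1.const_add u
  have hψ' : ∀ t : ℝ, HasDerivAt ψ
      (⟪g (u + t • (v - u)), v - u⟫ - c - β / 2 * ‖v - u‖ ^ 2 * (2 * t)) t := by
    intro t
    have h1 : HasDerivAt (fun s : ℝ => F (u + s • (v - u)))
        (((innerSL ℝ) (g (u + t • (v - u)))) (v - u)) t :=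
      (hdiff (u + t • (v - u))).comp_hasDerivAt t (hline t)
    have h2 : HasDerivAt (fun s : ℝ => s * c) c t := by
      simpa using (hasDerivAt_id t).mul_const c
    have h3 : HasDerivAt (fun s : ℝ => β / 2 * ‖v - u‖ ^ 2 * s ^ 2)
        (β / 2 * ‖v - u‖ ^ 2 * (2 * t)) t := by
      have := ((hasDerivAt_pow 2 t).const_mul (β / 2 * ‖v - u‖ ^ 2))
      simpa [mul_comm, mul_assoc, mul_left_comm] using this
    have h4 := (h1.sub h2).sub h3
    simp only [innerSL_apply_apply] at h4
    exact h4
  have hdiffψ : Differentiable ℝ ψ := fun t => (hψ' t).differentiableAt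
  have hanti : AntitoneOn ψ (Set.Icc (0 : ℝ) 1) := by
    apply antitoneOn_of_deriv_nonpos (convex_Icc 0 1) hdiffψ.continuous.continuousOn
      (hdiffψ.differentiableOn)
    intro t ht
    rw [interior_Icc] at ht
    rw [(hψ' t).deriv]
    have hineq : ⟪g (u + t • (v - u)) - g u, v - u⟫ ≤ β * t * ‖v - u‖ ^ 2 := by
      calc ⟪g (u + t • (v - u)) - g u, v - u⟫ ≤ ‖g (u + t • (v - u)) - g u‖ * ‖v - u‖ :=
            real_inner_le_norm _ _
        _ ≤ β * ‖(u + t • (v - u)) - u‖ * ‖v - u‖ := by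
            have := hsmooth (u + t • (v - u)) u
            nlinarith [norm_nonneg (v - u)]
        _ = β * t * ‖v - u‖ ^ 2 := by
            rw [show (u + t • (v - u)) - u = t • (v - u) by abel, norm_smul]
            simp [abs_of_pos ht.1, sq]
            ring
    have hsplit : ⟪g (u + t • (v - u)), v - u⟫ - c = ⟪g (u + t • (v - u)) - g u, v - u⟫ := by
      rw [hc, inner_sub_left]
    nlinarith [hineq]
  have h01 : ψ 1 ≤ ψ 0 := hanti (by norm_num) (by norm_num) zero_le_one
  have e0 : ψ 0 = F u := by simp [hψ]
  have e1 : ψ 1 = F v - c - β / 2 * ‖v - u‖ ^ 2 := by simp [hψ]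
  rw [e0, e1] at h01
  linarith

/-- Cocoercivity (Baillon–Haddad). -/
lemma sewa_cocoercive (F : E → ℝ) (g : E → E) (β : ℝ) (hβ : 0 < β)
    (hdiff : ∀ x : E, HasFDerivAt F ((innerSL ℝ) (g x)) x)
    (hsmooth : ∀ u v : E, ‖g u - g v‖ ≤ β * ‖u - v‖)
    (hconv : ConvexOn ℝ Set.univ F) (u v : E) :
    (1 / β) * ‖g u - g v‖ ^ 2 ≤ ⟪g u - g v, u - v⟫ := by
  -- gradient inequality from convexity
  have grad_ineq : ∀ a b : E, F a + ⟪g a, b - a⟫ ≤ F b := by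
    intro a b
    have hline : ConvexOn ℝ Set.univ (fun t : ℝ => F (AffineMap.lineMap a b t)) := by
      have := hconv.comp_affineMap (AffineMap.lineMap a b : ℝ →ᵃ[ℝ] E)
      exact this
    have hd : HasDerivAt (fun t : ℝ => F (AffineMap.lineMap a b t))
        (((innerSL ℝ) (g a)) (b - a)) 0 := by
      have hl : ∀ t : ℝ, AffineMap.lineMap a b t = a + t • (b - a) := by
        intro t; simp [AffineMap.lineMap_apply]; abel
      have hla : HasDerivAt (fun t : ℝ => AffineMap.lineMap a b t) (b - a) (0 : ℝ) := by
        have h1 : HasDerivAt (fun s : ℝ => a + s • (b - a)) (b - a) 0 := by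
          simpa using ((hasDerivAt_id (0:ℝ)).smul_const (b - a)).const_add a
        simpa only [hl] using h1
      have := (hdiff (AffineMap.lineMap a b (0:ℝ))).comp_hasDerivAt 0 hla
      simp at this
      exact this
    have := hline.le_slope_of_hasDerivAt (Set.mem_univ (0:ℝ)) (Set.mem_univ (1:ℝ))
      zero_lt_one hd
    rw [slope_def_field] at this
    have h2 : ((innerSL ℝ) (g a)) (b - a) ≤ F b - F a := by
      simpa using this
    simp only [innerSL_apply_apply] at h2
    linarith
  -- For w, define G(x) = F x - ⟪g w, x⟫; min at w, apply descent
  have key : ∀ w z : E, 1 / (2 * β) * ‖g z - g w‖ ^ 2 ≤ F z - F w - ⟪g w, z - w⟫ := by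
    intro w z
    set G : E → ℝ := fun x => F x - ⟪g w, x⟫ with hG
    set gG : E → E := fun x => g x - g w with hgG
    have hdiffG : ∀ x : E, HasFDerivAt G ((innerSL ℝ) (gG x)) x := by
      intro x
      have h2 : HasFDerivAt (fun y : E => (⟪g w, y⟫ : ℝ)) ((innerSL ℝ) (g w)) x :=
        ((innerSL ℝ) (g w)).hasFDerivAt
      have := (hdiff x).sub h2
      simp only [hgG, map_sub]
      exact this
    have hsmoothG : ∀ a b : E, ‖gG a - gG b‖ ≤ β * ‖a - b‖ := by
      intro a b
      simpa [hgG, sub_sub_sub_cancel_right] using hsmooth a b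
    -- w is a global min of G
    have hmin : ∀ x : E, G w ≤ G x := by
      intro x
      have h := grad_ineq w x
      rw [inner_sub_right] at h
      simp only [hG]
      linarith
    -- descent step for G
    have hdesc := sewa_descent G gG β hβ.le hdiffG hsmoothG z (z - (1/β) • gG z)
    have hmin' := hmin (z - (1/β) • gG z)
    have e1 : (z - (1/β) • gG z) - z = -((1/β) • gG z) := by abel
    rw [e1] at hdesc
    have e2 : ⟪gG z, -((1/β) • gG z)⟫ = -(1/β) * ‖gG z‖ ^ 2 := by
      rw [inner_neg_right, real_inner_smul_right, real_inner_self_eq_norm_sq]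
      ring
    have e3 : ‖-((1/β) • gG z)‖ ^ 2 = (1/β)^2 * ‖gG z‖ ^ 2 := by
      rw [norm_neg, norm_smul, Real.norm_eq_abs, abs_of_pos (by positivity : (0:ℝ) < 1/β)]
      ring
    rw [e2, e3] at hdesc
    have hGw : G w ≤ G z - 1 / (2 * β) * ‖gG z‖ ^ 2 := by
      have hb : β / 2 * ((1/β)^2 * ‖gG z‖^2) = 1/(2*β) * ‖gG z‖^2 := by
        field_simp
      calc G w ≤ G (z - (1/β) • gG z) := hmin'
        _ ≤ G z + (-(1/β) * ‖gG z‖^2) + β/2 * ((1/β)^2 * ‖gG z‖^2) := hdesc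
        _ = G z - 1/β * ‖gG z‖^2 + 1/(2*β) * ‖gG z‖^2 := by rw [hb]; ring
        _ = G z - 1/(2*β) * ‖gG z‖^2 := by
            have hb2 : (1:ℝ)/β = 2 * (1/(2*β)) := by field_simp
            rw [hb2]; ring
    have eG : G z - G w = F z - F w - ⟪g w, z - w⟫ := by
      simp only [hG, inner_sub_right]; ring
    rw [← eG]
    linarith
  have h1 := key v u
  have h2 := key u v
  have e1 : ‖g u - g v‖ = ‖g v - g u‖ := by rw [← norm_neg]; congr 1; abel
  have e2 : ⟪g v, u - v⟫ + ⟪g u, v - u⟫ = -⟪g u - g v, u - v⟫ := by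
    rw [inner_sub_left]
    have : ⟪g u, v - u⟫ = -⟪g u, u - v⟫ := by
      rw [← inner_neg_right]; congr 1; abel
    rw [this]; ring
  rw [← e1] at h2
  have hb : (1:ℝ)/β = 2 * (1/(2*β)) := by field_simp
  rw [hb]
  linarith

end helpers

/-- **Lemma 3.1(1) (non-expansive).** If `F : E → ℝ` is differentiable with gradient `g`,
`β`-smooth (`β > 0`) and convex, then for every step size `0 ≤ α ≤ 2/β` the gradient-descent
update `w ↦ w - α • g w` is non-expansive. -/
theorem sewa_gradient_update_nonexpansive
    {E : Type*} [NormedAddCommGroup E] [InnerProductSpace ℝ E]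
    (F : E → ℝ) (g : E → E) (β α : ℝ) (hβ : 0 < β)
    (hdiff : ∀ x : E, HasFDerivAt F ((innerSL ℝ) (g x)) x)
    (hsmooth : ∀ u v : E, ‖g u - g v‖ ≤ β * ‖u - v‖)
    (hconv : ConvexOn ℝ Set.univ F)
    (hα0 : 0 ≤ α) (hα : α ≤ 2 / β) :
    ∀ u v : E, ‖(u - α • g u) - (v - α • g v)‖ ≤ ‖u - v‖ := by
  intro u v
  have hco := sewa_cocoercive F g β hβ hdiff hsmooth hconv u v
  have hrw : (u - α • g u) - (v - α • g v) = (u - v) - α • (g u - g v) := by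
    rw [smul_sub]; abel
  rw [hrw]
  have hsq : ‖(u - v) - α • (g u - g v)‖ ^ 2 ≤ ‖u - v‖ ^ 2 := by
    rw [real_inner_comm] at hco
    rw [norm_sub_sq_real, real_inner_smul_right, norm_smul, Real.norm_eq_abs,
      abs_of_nonneg hα0]
    have ha2 : α ^ 2 ≤ α * (2 / β) := by nlinarith
    have h1' : α ^ 2 * ‖g u - g v‖ ^ 2 ≤ α * (2 / β) * ‖g u - g v‖ ^ 2 :=
      mul_le_mul_of_nonneg_right ha2 (sq_nonneg _)
    have h2' : 2 * α * ((1/β) * ‖g u - g v‖ ^ 2) ≤ 2 * α * ⟪u - v, g u - g v⟫ :=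
      mul_le_mul_of_nonneg_left hco (by positivity)
    have he : (α * ‖g u - g v‖) ^ 2 = α ^ 2 * ‖g u - g v‖ ^ 2 := by ring
    have hlink : α * (2 / β) * ‖g u - g v‖ ^ 2 = 2 * α * (1 / β * ‖g u - g v‖ ^ 2) := by ring
    linarith [h1', h2']
  have h := Real.sqrt_le_sqrt hsq
  rwa [Real.sqrt_sq (norm_nonneg _), Real.sqrt_sq (norm_nonneg _)] at h
end

section
/- Let A be an ε-uniformly stable randomized algorithm. Then its expected generalization error is at most ε in absolute value: |∫_{Z^n} [∫_W (R_S(w) − R_D(w)) dA(S)(w)] dD^n(S)| ≤ ε, where D^n is the n-fold product of D on Z^n. -/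
open MeasureTheory ProbabilityTheory

private lemma sewa_integrable_of_bounded {α : Type*} [MeasurableSpace α] (μ : Measure α)
    [IsFiniteMeasure μ] {f : α → ℝ} (hf : AEStronglyMeasurable f μ) (C : ℝ)
    (h : ∀ a, |f a| ≤ C) : Integrable f μ :=
  (integrable_const C).mono' hf (Filter.Eventually.of_forall fun a => by
    simpa [Real.norm_eq_abs] using h a)

private lemma sewa_insertNth_eq_update {Z : Type*} {m : ℕ} (i : Fin (m + 1))
    (S : Fin (m + 1) → Z) (z : Z) :
    i.insertNth z (fun j => S (i.succAbove j)) = Function.update S i z := by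
  funext j
  rcases eq_or_ne j i with rfl | h
  · simp
  · obtain ⟨k, rfl⟩ := Fin.exists_succAbove_eq h
    rw [Fin.insertNth_apply_succAbove, Function.update_of_ne h]

private lemma sewa_measurePreserving_updateSwap {Z : Type*} [MeasurableSpace Z]
    (D : Measure Z) [IsProbabilityMeasure D] {m : ℕ} (i : Fin (m + 1)) :
    MeasurePreserving
      (fun p : (Fin (m + 1) → Z) × Z => (Function.update p.1 i p.2, p.1 i))
      ((Measure.pi fun _ : Fin (m + 1) => D).prod D)
      ((Measure.pi fun _ : Fin (m + 1) => D).prod D) := by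
  set μ : Measure (Fin (m + 1) → Z) := Measure.pi fun _ => D with hμ
  set μ' : Measure (Fin m → Z) := Measure.pi fun _ => D with hμ'
  set e : (Fin (m + 1) → Z) ≃ᵐ Z × (Fin m → Z) :=
    MeasurableEquiv.piFinSuccAbove (fun _ => Z) i with he_def
  have he : MeasurePreserving e μ (D.prod μ') :=
    measurePreserving_piFinSuccAbove (fun _ => D) i
  have hφ : MeasurePreserving (fun q : (Z × (Fin m → Z)) × Z => ((q.2, q.1.2), q.1.1))
      ((D.prod μ').prod D) ((D.prod μ').prod D) := by
    have h := ((MeasurePreserving.symm MeasurableEquiv.prodAssoc (measurePreserving_prodAssoc D μ' D)).comp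
      ((MeasurePreserving.id D).prod (Measure.measurePreserving_swap (μ := D) (ν := μ')))).comp
      (Measure.measurePreserving_swap (μ := (D.prod μ')) (ν := D))
    have hfun : (fun q : (Z × (Fin m → Z)) × Z => ((q.2, q.1.2), q.1.1)) =
        ⇑MeasurableEquiv.prodAssoc.symm ∘ Prod.map id Prod.swap ∘ Prod.swap := by
      funext ⟨⟨a, r⟩, z⟩; rfl
    rw [hfun]; exact h
  have hmain := (((MeasurePreserving.symm e he).prod (MeasurePreserving.id D)).comp hφ).comp
    (he.prod (MeasurePreserving.id D))
  have hfun2 : (fun p : (Fin (m + 1) → Z) × Z => (Function.update p.1 i p.2, p.1 i)) =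
      (Prod.map e.symm id) ∘ (fun q : (Z × (Fin m → Z)) × Z => ((q.2, q.1.2), q.1.1)) ∘
        (Prod.map e id) := by
    funext ⟨S, z⟩
    simp only [Function.comp_apply, Prod.map_apply, id]
    have h1 : (e S).1 = S i := rfl
    have h2 : e.symm (z, (e S).2) = Function.update S i z := by
      have hr : e.symm (z, (e S).2)
          = i.insertNth z (fun j => S (i.succAbove j)) := rfl
      rw [hr, sewa_insertNth_eq_update]
    rw [h1, h2]
  rw [hfun2]; exact hmain

/-- **Theorem 3.3 (generalization in expectation).** If a randomized algorithm `A`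
(a Markov kernel from datasets `Fin n → Z` to outputs `W`) is `ε`-uniformly stable for a
bounded measurable loss `F`, then its expected generalization error is at most `ε`
in absolute value. -/
theorem sewa_uniform_stability_implies_generalization
    {Z W : Type*} [MeasurableSpace Z] [MeasurableSpace W]
    (D : Measure Z) [IsProbabilityMeasure D]
    (n : ℕ) (hn : 1 ≤ n)
    (F : W → Z → ℝ)
    (hFmeas : Measurable (Function.uncurry F))
    (C : ℝ) (hFbdd : ∀ w z, |F w z| ≤ C)
    (A : Kernel (Fin n → Z) W) [IsMarkovKernel A]
    (ε : ℝ)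
    (hstable : ∀ S S' : Fin n → Z, (∃ j : Fin n, ∀ i, i ≠ j → S i = S' i) →
      ∀ z : Z, (∫ w, F w z ∂(A S)) - (∫ w, F w z ∂(A S')) ≤ ε) :
    |∫ S, (∫ w, (((1 : ℝ) / n) * ∑ i : Fin n, F w (S i) - ∫ z, F w z ∂D) ∂(A S))
        ∂(Measure.pi fun _ : Fin n => D)| ≤ ε := by
  classical
  obtain ⟨m, rfl⟩ : ∃ m, n = m + 1 := ⟨n - 1, (Nat.succ_pred_eq_of_pos hn).symm⟩
  have hZ : Nonempty Z := by
    by_contra h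
    have h0 : (Set.univ : Set Z) = ∅ := Set.univ_eq_empty_iff.2 (not_nonempty_iff.1 h)
    have h1 := measure_univ (μ := D)
    rw [h0, measure_empty] at h1
    exact zero_ne_one h1
  obtain ⟨z0⟩ := hZ
  have hε : 0 ≤ ε := by
    simpa using hstable (fun _ => z0) (fun _ => z0) ⟨0, fun _ _ => rfl⟩ z0
  set μ : Measure (Fin (m + 1) → Z) := Measure.pi fun _ => D with hμdef
  set ν : Measure ((Fin (m + 1) → Z) × Z) := μ.prod D with hνdef
  set g : (Fin (m + 1) → Z) → Z → ℝ := fun S z => ∫ w, F w z ∂(A S) with hgdef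
  -- joint measurability of g
  have hgm : Measurable fun p : (Fin (m + 1) → Z) × Z => g p.1 p.2 := by
    have h1 : Measurable fun q : ((Fin (m + 1) → Z) × Z) × W => F q.2 q.1.2 :=
      hFmeas.comp (measurable_snd.prodMk measurable_fst.snd)
    have h2 := h1.stronglyMeasurable.integral_kernel_prod_right'
      (κ := A.comap Prod.fst measurable_fst)
    simpa [Kernel.comap_apply] using h2.measurable
  have hgb : ∀ S z, |g S z| ≤ C := by
    intro S z
    have := norm_integral_le_of_norm_le_const (μ := A S) (f := fun w => F w z) (C := C)
      (Filter.Eventually.of_forall fun w => by simpa [Real.norm_eq_abs] using hFbdd w z)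
    simpa [Real.norm_eq_abs] using this
  -- inner rewrite
  have hinner : ∀ S : Fin (m + 1) → Z,
      (∫ w, (((1 : ℝ) / (m + 1 : ℕ)) * ∑ i : Fin (m + 1), F w (S i) - ∫ z, F w z ∂D) ∂(A S))
        = ((1 : ℝ) / (m + 1 : ℕ)) * ∑ i : Fin (m + 1), g S (S i) - ∫ z, g S z ∂D := by
    intro S
    have hFi : ∀ z, Integrable (fun w => F w z) (A S) := fun z =>
      sewa_integrable_of_bounded _ ((hFmeas.comp
        (measurable_id.prodMk measurable_const)).aestronglyMeasurable) C fun w => hFbdd w z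
    have h1 : Integrable (fun w => ∑ i : Fin (m + 1), F w (S i)) (A S) :=
      integrable_finset_sum _ fun i _ => hFi (S i)
    have hFprod : Integrable (Function.uncurry F) ((A S).prod D) :=
      sewa_integrable_of_bounded _ hFmeas.aestronglyMeasurable C fun q => hFbdd q.1 q.2
    have h2 : Integrable (fun w => ∫ z, F w z ∂D) (A S) := hFprod.integral_prod_left
    rw [integral_sub (h1.const_mul _) h2, integral_const_mul,
      integral_finset_sum _ fun i _ => hFi (S i)]
    congr 1
    exact integral_integral_swap hFprod
  rw [integral_congr_ae (Filter.Eventually.of_forall hinner)]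
  -- outer integrabilities
  have hI1 : ∀ i : Fin (m + 1), Integrable (fun S => g S (S i)) μ := fun i =>
    sewa_integrable_of_bounded _
      ((hgm.comp (measurable_id.prodMk (measurable_pi_apply i))).aestronglyMeasurable)
      C fun S => hgb _ _
  have hgprod : Integrable (fun p : (Fin (m + 1) → Z) × Z => g p.1 p.2) ν :=
    sewa_integrable_of_bounded _ hgm.aestronglyMeasurable C fun p => hgb _ _
  have hI2 : Integrable (fun S => ∫ z, g S z ∂D) μ := hgprod.integral_prod_left
  rw [integral_sub ((integrable_finset_sum _ fun i _ => hI1 i).const_mul _) hI2,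
    integral_const_mul, integral_finset_sum _ fun i _ => hI1 i]
  -- key per-coordinate bound
  set J : ℝ := ∫ S, ∫ z, g S z ∂D ∂μ with hJdef
  have hJ : J = ∫ p, g p.1 p.2 ∂ν := (integral_prod _ hgprod).symm
  have hkey : ∀ i : Fin (m + 1), |(∫ S, g S (S i) ∂μ) - J| ≤ ε := by
    intro i
    have hupd : Measurable fun p : (Fin (m + 1) → Z) × Z => Function.update p.1 i p.2 := by
      apply measurable_pi_lambda
      intro j
      rcases eq_or_ne j i with rfl | h
      · simpa [Function.update_self] using
          (measurable_snd : Measurable fun p : (Fin (m + 1) → Z) × Z => p.2)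
      · simpa [Function.update_of_ne h, Function.comp_def] using (measurable_pi_apply j).comp
          (measurable_fst : Measurable fun p : (Fin (m + 1) → Z) × Z => p.1)
    have hm1 : Measurable fun p : (Fin (m + 1) → Z) × Z => g p.1 (p.1 i) :=
      hgm.comp (measurable_fst.prodMk (measurable_fst.eval))
    have hm2 : Measurable fun p : (Fin (m + 1) → Z) × Z =>
        g (Function.update p.1 i p.2) (p.1 i) :=
      hgm.comp (hupd.prodMk measurable_fst.eval)
    have hint1 : Integrable (fun p : (Fin (m + 1) → Z) × Z => g p.1 (p.1 i)) ν :=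
      sewa_integrable_of_bounded _ hm1.aestronglyMeasurable C fun p => hgb _ _
    have hint2 : Integrable
        (fun p : (Fin (m + 1) → Z) × Z => g (Function.update p.1 i p.2) (p.1 i)) ν :=
      sewa_integrable_of_bounded _ hm2.aestronglyMeasurable C fun p => hgb _ _
    have hIeq : (∫ S, g S (S i) ∂μ) = ∫ p : (Fin (m + 1) → Z) × Z, g p.1 (p.1 i) ∂ν := by
      rw [hνdef, integral_prod _ hint1]
      simp
    have hT : MeasurePreserving
        (fun p : (Fin (m + 1) → Z) × Z => (Function.update p.1 i p.2, p.1 i)) ν ν :=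
      sewa_measurePreserving_updateSwap D i
    have hcomp : (∫ p, g p.1 p.2 ∂ν)
        = ∫ p : (Fin (m + 1) → Z) × Z, g (Function.update p.1 i p.2) (p.1 i) ∂ν := by
      conv_lhs => rw [← hT.map_eq]
      exact integral_map hT.measurable.aemeasurable
        (hT.map_eq.symm ▸ hgm.aestronglyMeasurable)
    rw [hIeq, hJ, hcomp, ← integral_sub hint1 hint2]
    have habs : ∀ p : (Fin (m + 1) → Z) × Z,
        |g p.1 (p.1 i) - g (Function.update p.1 i p.2) (p.1 i)| ≤ ε := by
      intro p
      rw [abs_le]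
      constructor
      · have := hstable (Function.update p.1 i p.2) p.1
          ⟨i, fun j hj => Function.update_of_ne hj _ _⟩ (p.1 i)
        linarith
      · exact hstable p.1 (Function.update p.1 i p.2)
          ⟨i, fun j hj => (Function.update_of_ne hj _ _).symm⟩ (p.1 i)
    calc |∫ p, (g p.1 (p.1 i) - g (Function.update p.1 i p.2) (p.1 i)) ∂ν|
        ≤ ∫ p, |g p.1 (p.1 i) - g (Function.update p.1 i p.2) (p.1 i)| ∂ν := by
          simpa [Real.norm_eq_abs] using
            norm_integral_le_integral_norm (μ := ν)
              (f := fun p : (Fin (m + 1) → Z) × Z =>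
                g p.1 (p.1 i) - g (Function.update p.1 i p.2) (p.1 i))
      _ ≤ ∫ _p, ε ∂ν := integral_mono (hint1.sub hint2).abs (integrable_const ε)
            fun p => habs p
      _ = ε := by simp
  -- conclude
  have hsum : ((1 : ℝ) / (m + 1 : ℕ)) * (∑ i : Fin (m + 1), ∫ S, g S (S i) ∂μ) - J
      = ((1 : ℝ) / (m + 1 : ℕ)) * ∑ i : Fin (m + 1), ((∫ S, g S (S i) ∂μ) - J) := by
    rw [Finset.sum_sub_distrib, mul_sub, Finset.sum_const, Finset.card_univ,
      Fintype.card_fin, nsmul_eq_mul]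
    have hne : ((m : ℝ) + 1) ≠ 0 := by positivity
    push_cast
    field_simp
  rw [hsum]
  have hpos : (0 : ℝ) ≤ (1 : ℝ) / (m + 1 : ℕ) := by positivity
  rw [abs_mul, abs_of_nonneg hpos]
  calc ((1 : ℝ) / (m + 1 : ℕ)) * |∑ i : Fin (m + 1), ((∫ S, g S (S i) ∂μ) - J)|
      ≤ ((1 : ℝ) / (m + 1 : ℕ)) * ∑ i : Fin (m + 1), |(∫ S, g S (S i) ∂μ) - J| := by
        gcongr
        exact Finset.abs_sum_le_sum_abs _ _
    _ ≤ ((1 : ℝ) / (m + 1 : ℕ)) * ((m + 1 : ℕ) * ε) := by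
        gcongr
        calc ∑ i : Fin (m + 1), |(∫ S, g S (S i) ∂μ) - J|
            ≤ ∑ _i : Fin (m + 1), ε := Finset.sum_le_sum fun i _ => hkey i
          _ = (m + 1 : ℕ) * ε := by simp [mul_comm]
    _ = ε := by
        have hne : ((m + 1 : ℕ) : ℝ) ≠ 0 := by positivity
        field_simp
end

section
/- Let E be a real inner product space, let w_1, …, w_k and w_1', …, w_k' be points of E, and let s_1, …, s_k ∈ [0,1] with s = max_i s_i. For a binary mask m ∈ {0,1}^k define its probability p(m) = ∏_{i=1}^k s_i^{m_i}(1 − s_i)^{1 − m_i}. Then the expected norm of the difference of masked averages satisfies Σ_{m ∈ {0,1}^k} p(m) · ‖(1/k)Σ_{i=1}^k m_i w_i − (1/k)Σ_{i=1}^k m_i w_i'‖ ≤ s · (1/k)Σ_{i=1}^k ‖w_i − w_i'‖. -/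
set_option maxHeartbeats 1000000


/-- **Key estimate in Lemma 4.1.** For independent Bernoulli masks `m i ~ Bern (s i)` with
`s = max_i s i`, the mask-expected norm of the difference of the masked averages of
`w` and `w'` is at most `s` times the average of `‖w i - w' i‖`. -/
theorem sewa_mask_expected_average_distance
    {E : Type*} [NormedAddCommGroup E] [InnerProductSpace ℝ E]
    (k : ℕ) (hk : 0 < k)
    (w w' : Fin k → E) (s : Fin k → ℝ)
    (hs : ∀ i, s i ∈ Set.Icc (0 : ℝ) 1) :
    ∑ m : Fin k → Bool,
        (∏ i, if m i then s i else 1 - s i) *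
          ‖((1 : ℝ) / k) • ∑ i, (if m i then (1 : ℝ) else 0) • w i -
            ((1 : ℝ) / k) • ∑ i, (if m i then (1 : ℝ) else 0) • w' i‖
      ≤ (⨆ i, s i) * (((1 : ℝ) / k) * ∑ i, ‖w i - w' i‖) := by
  haveI : Nonempty (Fin k) := Fin.pos_iff_nonempty.mp hk
  have hkR : (0 : ℝ) < k := by exact_mod_cast hk
  have hSle : ∀ i, s i ≤ ⨆ j, s j := fun i =>
    le_ciSup (Set.Finite.bddAbove (Set.finite_range s)) i
  have hp0 : ∀ m : Fin k → Bool, 0 ≤ ∏ i, if m i then s i else 1 - s i := by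
    intro m
    apply Finset.prod_nonneg
    intro i _
    rcases hs i with ⟨h0, h1⟩
    split <;> linarith
  -- pointwise norm bound
  have hbound : ∀ m : Fin k → Bool,
      ‖((1 : ℝ) / k) • ∑ i, (if m i then (1 : ℝ) else 0) • w i -
        ((1 : ℝ) / k) • ∑ i, (if m i then (1 : ℝ) else 0) • w' i‖
      ≤ (1 / k) * ∑ i, (if m i then ‖w i - w' i‖ else 0) := by
    intro m
    rw [← smul_sub, ← Finset.sum_sub_distrib, norm_smul]
    have h1 : ‖(1 : ℝ) / k‖ = 1 / k := by
      rw [Real.norm_eq_abs, abs_of_pos (by positivity)]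
    rw [h1]
    apply mul_le_mul_of_nonneg_left _ (by positivity)
    calc ‖∑ i, ((if m i then (1:ℝ) else 0) • w i - (if m i then (1:ℝ) else 0) • w' i)‖
        ≤ ∑ i, ‖(if m i then (1:ℝ) else 0) • w i - (if m i then (1:ℝ) else 0) • w' i‖ :=
          norm_sum_le _ _
      _ ≤ ∑ i, (if m i then ‖w i - w' i‖ else 0) := by
          apply Finset.sum_le_sum
          intro i _
          by_cases h : m i <;> simp [h]
  calc ∑ m : Fin k → Bool,
        (∏ i, if m i then s i else 1 - s i) *
          ‖((1 : ℝ) / k) • ∑ i, (if m i then (1 : ℝ) else 0) • w i -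
            ((1 : ℝ) / k) • ∑ i, (if m i then (1 : ℝ) else 0) • w' i‖
      ≤ ∑ m : Fin k → Bool,
        (∏ i, if m i then s i else 1 - s i) *
          ((1 / k) * ∑ i, (if m i then ‖w i - w' i‖ else 0)) := by
        apply Finset.sum_le_sum
        intro m _
        exact mul_le_mul_of_nonneg_left (hbound m) (hp0 m)
    _ = (1 / k) * ∑ i, s i * ‖w i - w' i‖ := by
        simp_rw [mul_left_comm _ ((1:ℝ)/(k:ℝ))]
        rw [← Finset.mul_sum]
        congr 1
        simp_rw [Finset.mul_sum]
        rw [Finset.sum_comm]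
        apply Finset.sum_congr rfl
        intro i _
        -- marginal: ∑ m, p m * χ (m i) ‖d i‖ = s i * ‖d i‖
        have key : ∑ m : Fin k → Bool,
            ∏ j, ((if m j then s j else 1 - s j) *
              (if j = i then (if m j then ‖w i - w' i‖ else 0) else 1))
            = ∏ j, ∑ b : Bool, ((if b then s j else 1 - s j) *
              (if j = i then (if b then ‖w i - w' i‖ else 0) else 1)) :=
          (Fintype.prod_sum (fun (j : Fin k) (b : Bool) => (if b then s j else 1 - s j) *
            (if j = i then (if b then ‖w i - w' i‖ else 0) else 1))).symm
        have lhs_eq : ∀ m : Fin k → Bool,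
            (∏ j, if m j then s j else 1 - s j) * (if m i then ‖w i - w' i‖ else 0)
            = ∏ j, ((if m j then s j else 1 - s j) *
              (if j = i then (if m j then ‖w i - w' i‖ else 0) else 1)) := by
          intro m
          rw [Finset.prod_mul_distrib]
          congr 1
          rw [Finset.prod_ite_eq' Finset.univ i
            (fun j => if m j then ‖w i - w' i‖ else 0)]
          simp
        simp_rw [lhs_eq]
        rw [key]
        have rhs_eq : ∀ j, (∑ b : Bool, ((if b then s j else 1 - s j) *
              (if j = i then (if b then ‖w i - w' i‖ else 0) else 1)))
            = if j = i then s i * ‖w i - w' i‖ else 1 := by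
          intro j
          by_cases h : j = i
          · subst h; simp [Fintype.sum_bool]
          · simp [h, Fintype.sum_bool]
        simp_rw [rhs_eq]
        rw [Finset.prod_ite_eq' Finset.univ i (fun _ => s i * ‖w i - w' i‖)]
        simp
    _ ≤ (1 / k) * ∑ i, (⨆ j, s j) * ‖w i - w' i‖ := by
        apply mul_le_mul_of_nonneg_left _ (by positivity)
        exact Finset.sum_le_sum fun i _ =>
          mul_le_mul_of_nonneg_right (hSle i) (norm_nonneg _)
    _ = (⨆ i, s i) * ((1 / k) * ∑ i, ‖w i - w' i‖) := by
        rw [← Finset.mul_sum]; ring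
end

section
/- Let E be a real inner product space, let f : E → ℝ be L-Lipschitz (|f(u) − f(v)| ≤ L‖u − v‖ for all u, v), let w_1, …, w_k and w_1', …, w_k' be points of E, and let s_1, …, s_k ∈ [0,1] with s = max_i s_i. For a binary mask m ∈ {0,1}^k with probability p(m) = ∏_{i=1}^k s_i^{m_i}(1 − s_i)^{1 − m_i}, the mask-expected loss difference of the selective averages satisfies Σ_{m ∈ {0,1}^k} p(m) · |f((1/k)Σ_{i=1}^k m_i w_i) − f((1/k)Σ_{i=1}^k m_i w_i')| ≤ s L · (1/k)Σ_{i=1}^k ‖w_i − w_i'‖. -/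
open Finset

private lemma sewa_sum_prod_bool {k : ℕ} (h : Fin k → Bool → ℝ) :
    ∑ m : Fin k → Bool, ∏ i, h i (m i) = ∏ i, (h i true + h i false) := by
  have := Finset.prod_univ_sum (fun _ : Fin k => (Finset.univ : Finset Bool)) (fun i b => h i b)
  simp only [Fintype.piFinset_univ, Fintype.sum_bool] at this
  rw [← this]

private lemma sewa_expect {k : ℕ} (s c : Fin k → ℝ) (i : Fin k) :
    ∑ m : Fin k → Bool,
      (∏ j, if m j then s j else 1 - s j) * (if m i then c i else 0)
      = s i * c i := by
  classical
  set h : Fin k → Bool → ℝ := fun j b =>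
    (if b then s j else 1 - s j) * (if j = i then (if b then c i else 0) else 1) with hh
  have hpt : ∀ m : Fin k → Bool,
      (∏ j, if m j then s j else 1 - s j) * (if m i then c i else 0)
      = ∏ j, h j (m j) := by
    intro m
    rw [hh]
    simp only []
    rw [Finset.prod_mul_distrib]
    congr 1
    rw [Finset.prod_ite_eq' Finset.univ i (fun j => if m j then c i else 0)]
    simp
  rw [Finset.sum_congr rfl (fun m _ => hpt m), sewa_sum_prod_bool h]
  have hfac : ∀ j, h j true + h j false = if j = i then s i * c i else 1 := by
    intro j
    rw [hh]
    by_cases hj : j = i <;> simp [hj]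
  rw [Finset.prod_congr rfl (fun j _ => hfac j),
    Finset.prod_ite_eq' Finset.univ i (fun _ => s i * c i)]
  simp



/-- **Lemma 4.1.** For an `L`-Lipschitz function `f` and independent Bernoulli masks
`m i ~ Bern (s i)` with `s = max_i s i`, the mask-expected loss difference of the selective
weight averages is at most `s L` times the average of `‖w i - w' i‖`. -/
theorem sewa_mask_expected_loss_difference
    {E : Type*} [NormedAddCommGroup E] [InnerProductSpace ℝ E]
    (f : E → ℝ) (L : ℝ)
    (hLip : ∀ u v : E, |f u - f v| ≤ L * ‖u - v‖)
    (k : ℕ) (hk : 0 < k)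
    (w w' : Fin k → E) (s : Fin k → ℝ)
    (hs : ∀ i, s i ∈ Set.Icc (0 : ℝ) 1) :
    ∑ m : Fin k → Bool,
        (∏ i, if m i then s i else 1 - s i) *
          |f (((1 : ℝ) / k) • ∑ i, (if m i then (1 : ℝ) else 0) • w i) -
            f (((1 : ℝ) / k) • ∑ i, (if m i then (1 : ℝ) else 0) • w' i)|
      ≤ (⨆ i, s i) * L * (((1 : ℝ) / k) * ∑ i, ‖w i - w' i‖) := by
  classical
  have hkR : (0 : ℝ) < (k : ℝ) := by exact_mod_cast hk
  rcases lt_or_ge L 0 with hL | hL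
  · have hsub : ∀ u v : E, u = v := by
      intro u v
      by_contra h
      have h1 : 0 < ‖u - v‖ := by rw [norm_pos_iff, sub_ne_zero]; exact h
      nlinarith [hLip u v, abs_nonneg (f u - f v)]
    have hL0 : (∑ m : Fin k → Bool,
        (∏ i, if m i then s i else 1 - s i) *
          |f (((1 : ℝ) / k) • ∑ i, (if m i then (1 : ℝ) else 0) • w i) -
            f (((1 : ℝ) / k) • ∑ i, (if m i then (1 : ℝ) else 0) • w' i)|) = 0 := by
      apply Finset.sum_eq_zero
      intro m _
      rw [hsub (((1 : ℝ) / k) • ∑ i, (if m i then (1 : ℝ) else 0) • w i)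
        (((1 : ℝ) / k) • ∑ i, (if m i then (1 : ℝ) else 0) • w' i), sub_self, abs_zero, mul_zero]
    have hR0 : (∑ i, ‖w i - w' i‖) = 0 :=
      Finset.sum_eq_zero fun i _ => by rw [hsub (w i) (w' i), sub_self, norm_zero]
    rw [hL0, hR0, mul_zero, mul_zero]
  · set S := ⨆ i, s i with hS
    have hSmem : ∀ i, s i ≤ S :=
      fun i => le_ciSup (Set.Finite.bddAbove (Set.finite_range s)) i
    have hp : ∀ m : Fin k → Bool, (0 : ℝ) ≤ ∏ i, if m i then s i else 1 - s i := by
      intro m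
      apply Finset.prod_nonneg
      intro i _
      rcases hs i with ⟨h0, h1⟩
      by_cases hm : m i <;> simp [hm] <;> linarith
    have hterm : ∀ m : Fin k → Bool,
        |f (((1 : ℝ) / k) • ∑ i, (if m i then (1 : ℝ) else 0) • w i) -
            f (((1 : ℝ) / k) • ∑ i, (if m i then (1 : ℝ) else 0) • w' i)|
          ≤ L * (((1 : ℝ) / k) * ∑ i, (if m i then ‖w i - w' i‖ else 0)) := by
      intro m
      refine le_trans (hLip _ _) (mul_le_mul_of_nonneg_left ?_ hL)
      rw [← smul_sub, ← Finset.sum_sub_distrib]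
      have he : ∀ i, (if m i then (1 : ℝ) else 0) • w i - (if m i then (1 : ℝ) else 0) • w' i
          = (if m i then (1 : ℝ) else 0) • (w i - w' i) := fun i => (smul_sub _ _ _).symm
      simp_rw [he]
      rw [norm_smul]
      have h1k : ‖(1 : ℝ) / (k : ℝ)‖ = (1 : ℝ) / k := by
        rw [Real.norm_eq_abs, abs_of_pos]; positivity
      rw [h1k]
      refine mul_le_mul_of_nonneg_left ?_ (by positivity)
      refine le_trans (norm_sum_le _ _) (le_of_eq (Finset.sum_congr rfl fun i _ => ?_))
      by_cases hm : m i <;> simp [hm]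
    calc ∑ m : Fin k → Bool,
        (∏ i, if m i then s i else 1 - s i) *
          |f (((1 : ℝ) / k) • ∑ i, (if m i then (1 : ℝ) else 0) • w i) -
            f (((1 : ℝ) / k) • ∑ i, (if m i then (1 : ℝ) else 0) • w' i)|
        ≤ ∑ m : Fin k → Bool, (∏ i, if m i then s i else 1 - s i) *
            (L * (((1 : ℝ) / k) * ∑ i, (if m i then ‖w i - w' i‖ else 0))) :=
          Finset.sum_le_sum fun m _ => mul_le_mul_of_nonneg_left (hterm m) (hp m)
      _ = (L * ((1 : ℝ) / k)) * ∑ i, s i * ‖w i - w' i‖ := by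
          have key : ∀ i : Fin k, (∑ m : Fin k → Bool,
              (∏ j, if m j then s j else 1 - s j) * (if m i then ‖w i - w' i‖ else 0))
              = s i * ‖w i - w' i‖ := fun i => sewa_expect s (fun j => ‖w j - w' j‖) i
          rw [Finset.mul_sum]
          simp only [Finset.mul_sum]
          rw [Finset.sum_comm]
          apply Finset.sum_congr rfl
          intro i _
          rw [← key i, Finset.mul_sum]
          apply Finset.sum_congr rfl
          intro m _
          ring
      _ ≤ (L * ((1 : ℝ) / k)) * ∑ i, S * ‖w i - w' i‖ := by
          refine mul_le_mul_of_nonneg_left (Finset.sum_le_sum fun i _ => ?_) (by positivity)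
          exact mul_le_mul_of_nonneg_right (hSmem i) (norm_nonneg _)
      _ = S * L * (((1 : ℝ) / k) * ∑ i, ‖w i - w' i‖) := by
          rw [← Finset.mul_sum]; ring
end

section
/- Suppose for every z ∈ Z the loss F(·, z) is convex, L-Lipschitz, and β-smooth, and run SGD with constant step size 0 < α ≤ 2/β for T steps on the neighbouring datasets S and S'. Then for every example z, the expectation over the uniform index sequences I and over the Bernoulli masks m of the selective-average loss difference satisfies E_I E_m |F(w̄_T(I,m), z) − F(w̄_T'(I,m), z)| ≤ (2 α L² s / n)(T − k/2). -/
open RealInnerProductSpace Finset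
section Aux

variable {E : Type*} [NormedAddCommGroup E] [InnerProductSpace ℝ E]

lemma line_hasDerivAt (f : E → ℝ) (g : E → E)
    (hdiff : ∀ x, HasFDerivAt f ((innerSL ℝ) (g x)) x) (c d : E) (t : ℝ) :
    HasDerivAt (fun t : ℝ => f (c + t • d)) ⟪g (c + t • d), d⟫ t := by
  have h1 : HasDerivAt (fun t : ℝ => c + t • d) d t := by
    simpa using ((hasDerivAt_id t).smul_const d).const_add c
  have h2 := (hdiff (c + t • d)).comp_hasDerivAt t h1
  exact h2

lemma descent_lemma (f : E → ℝ) (g : E → E) (β : ℝ) (hβ : 0 < β)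
    (hdiff : ∀ x, HasFDerivAt f ((innerSL ℝ) (g x)) x)
    (hsmooth : ∀ u v, ‖g u - g v‖ ≤ β * ‖u - v‖) (x y : E) :
    f y ≤ f x + ⟪g x, y - x⟫ + β / 2 * ‖y - x‖ ^ 2 := by
  set d := y - x with hd
  set ψ : ℝ → ℝ := fun t => f (x + t • d) - t * ⟪g x, d⟫ - β * ‖d‖ ^ 2 / 2 * t ^ 2 with hψ
  have hψd : ∀ t : ℝ, HasDerivAt ψ (⟪g (x + t • d), d⟫ - ⟪g x, d⟫ - β * ‖d‖ ^ 2 * t) t := by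
    intro t
    have h1 := line_hasDerivAt f g hdiff x d t
    have h2 : HasDerivAt (fun t : ℝ => t * ⟪g x, d⟫) ⟪g x, d⟫ t := by
      simpa using (hasDerivAt_id t).mul_const ⟪g x, d⟫
    have h3 : HasDerivAt (fun t : ℝ => β * ‖d‖ ^ 2 / 2 * t ^ 2) (β * ‖d‖ ^ 2 * t) t := by
      have := (hasDerivAt_pow 2 t).const_mul (β * ‖d‖ ^ 2 / 2)
      refine this.congr_deriv ?_
      ring
    exact (h1.sub h2).sub h3
  have key : AntitoneOn ψ (Set.Icc 0 1) := by
    apply antitoneOn_of_deriv_nonpos (convex_Icc 0 1)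
    · exact fun t _ => (hψd t).continuousAt.continuousWithinAt
    · exact fun t _ => ((hψd t).differentiableAt).differentiableWithinAt
    · intro t ht
      rw [interior_Icc] at ht
      rw [(hψd t).deriv]
      have h4 : ⟪g (x + t • d), d⟫ - ⟪g x, d⟫ ≤ β * ‖d‖ ^ 2 * t := by
        have e1 : ⟪g (x + t • d), d⟫ - ⟪g x, d⟫ = ⟪g (x + t • d) - g x, d⟫ := by
          rw [inner_sub_left]
        rw [e1]
        calc ⟪g (x + t • d) - g x, d⟫ ≤ ‖g (x + t • d) - g x‖ * ‖d‖ := real_inner_le_norm _ _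
          _ ≤ (β * ‖(x + t • d) - x‖) * ‖d‖ := by
              exact mul_le_mul_of_nonneg_right (hsmooth _ _) (norm_nonneg d)
          _ = β * ‖d‖ ^ 2 * t := by
              have : (x + t • d) - x = t • d := by abel
              rw [this, norm_smul, Real.norm_eq_abs, abs_of_pos ht.1]
              ring
      linarith
  have h01 : ψ 1 ≤ ψ 0 := key (Set.mem_Icc.2 ⟨le_refl _, zero_le_one⟩)
    (Set.mem_Icc.2 ⟨zero_le_one, le_refl _⟩) zero_le_one
  have e0 : ψ 0 = f x := by simp [hψ]
  have e1 : ψ 1 = f y - ⟪g x, d⟫ - β * ‖d‖ ^ 2 / 2 := by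
    have hxy : x + d = y := by rw [hd]; abel
    simp [hψ, hxy]
  rw [e0, e1] at h01
  nlinarith [h01]

lemma convex_lb (f : E → ℝ) (g : E → E)
    (hdiff : ∀ x, HasFDerivAt f ((innerSL ℝ) (g x)) x)
    (hconv : ConvexOn ℝ Set.univ f) (x y : E) :
    f x + ⟪g x, y - x⟫ ≤ f y := by
  set φ : ℝ → ℝ := fun t => f (x + t • (y - x)) with hφ
  have hφconv : ConvexOn ℝ Set.univ φ := by
    have h := hconv.comp_affineMap (AffineMap.lineMap x y : ℝ →ᵃ[ℝ] E)
    have : (f ∘ (AffineMap.lineMap x y : ℝ →ᵃ[ℝ] E)) = φ := by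
      funext t
      simp [hφ, AffineMap.lineMap_apply, add_comm]
    rw [this] at h
    simpa using h
  have hd0 : HasDerivAt φ ⟪g x, y - x⟫ 0 := by
    have := line_hasDerivAt f g hdiff x (y - x) 0
    simpa using this
  have hs := hφconv.le_slope_of_hasDerivAt (Set.mem_univ 0) (Set.mem_univ 1) zero_lt_one hd0
  have : slope φ 0 1 = φ 1 - φ 0 := by
    simp [slope_def_field]
  rw [this] at hs
  have e0 : φ 0 = f x := by simp [hφ]
  have e1 : φ 1 = f y := by simp [hφ]
  rw [e0, e1] at hs
  linarith

lemma cocoercive (f : E → ℝ) (g : E → E) (β : ℝ) (hβ : 0 < β)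
    (hdiff : ∀ x, HasFDerivAt f ((innerSL ℝ) (g x)) x)
    (hconv : ConvexOn ℝ Set.univ f)
    (hsmooth : ∀ u v, ‖g u - g v‖ ≤ β * ‖u - v‖) (u v : E) :
    ‖g u - g v‖ ^ 2 ≤ β * ⟪g u - g v, u - v⟫ := by
  have key : ∀ a b : E, f b + ⟪g b, a - b⟫ + ‖g a - g b‖ ^ 2 / (2 * β) ≤ f a := by
    intro a b
    set y := a - (1 / β) • (g a - g b) with hy
    have h1 := descent_lemma f g β hβ hdiff hsmooth a y
    have h2 := convex_lb f g hdiff hconv b y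
    have ey : y - a = -((1 / β) • (g a - g b)) := by
      rw [hy]; abel
    have e1 : ⟪g a, y - a⟫ = -(1 / β) * ⟪g a, g a - g b⟫ := by
      rw [ey, inner_neg_right, real_inner_smul_right]; ring
    have e2 : ‖y - a‖ ^ 2 = (1 / β) ^ 2 * ‖g a - g b‖ ^ 2 := by
      rw [ey, norm_neg, norm_smul, Real.norm_eq_abs, abs_of_pos (by positivity), mul_pow]
    have e3 : y - b = (a - b) - (1 / β) • (g a - g b) := by
      rw [hy]; abel
    have e4 : ⟪g b, y - b⟫ = ⟪g b, a - b⟫ - (1 / β) * ⟪g b, g a - g b⟫ := by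
      rw [e3, inner_sub_right, real_inner_smul_right]
    have e5 : ⟪g a, g a - g b⟫ - ⟪g b, g a - g b⟫ = ‖g a - g b‖ ^ 2 := by
      rw [← inner_sub_left, real_inner_self_eq_norm_sq]
    rw [e1, e2] at h1
    rw [e4] at h2
    have hb2 : β / 2 * ((1 / β) ^ 2 * ‖g a - g b‖ ^ 2) = ‖g a - g b‖ ^ 2 / (2 * β) := by
      field_simp
    have hb3 : (1 / β) * ⟪g a, g a - g b⟫ - (1 / β) * ⟪g b, g a - g b⟫
        = ‖g a - g b‖ ^ 2 / β := by
      rw [← mul_sub, e5]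
      field_simp
    have hb4 : ‖g a - g b‖ ^ 2 / β - ‖g a - g b‖ ^ 2 / (2 * β) = ‖g a - g b‖ ^ 2 / (2 * β) := by
      field_simp
      ring
    linarith [h1, h2, hb2, hb3, hb4]
  have k1 := key u v
  have k2 := key v u
  have e6 : ‖g v - g u‖ = ‖g u - g v‖ := norm_sub_rev _ _
  have e7 : ⟪g u, v - u⟫ = -⟪g u, u - v⟫ := by
    rw [← inner_neg_right]; congr 1; abel
  have e8 : ⟪g v, u - v⟫ + -⟪g u, u - v⟫ = -⟪g u - g v, u - v⟫ := by
    rw [inner_sub_left]; ring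
  rw [e6] at k2
  rw [e7] at k2
  have hsum : ‖g u - g v‖ ^ 2 / β ≤ ⟪g u - g v, u - v⟫ := by
    have hb : ‖g u - g v‖ ^ 2 / (2 * β) + ‖g u - g v‖ ^ 2 / (2 * β) = ‖g u - g v‖ ^ 2 / β := by
      field_simp
      ring
    linarith [k1, k2, e8, hb]
  have hmul := mul_le_mul_of_nonneg_left hsum hβ.le
  have hdiv : β * (‖g u - g v‖ ^ 2 / β) = ‖g u - g v‖ ^ 2 := by field_simp
  linarith [hmul, hdiv]

lemma step_nonexpansive (f : E → ℝ) (g : E → E) (β : ℝ) (hβ : 0 < β)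
    (hdiff : ∀ x, HasFDerivAt f ((innerSL ℝ) (g x)) x)
    (hconv : ConvexOn ℝ Set.univ f)
    (hsmooth : ∀ u v, ‖g u - g v‖ ≤ β * ‖u - v‖)
    (α : ℝ) (hα : 0 < α) (hα2 : α ≤ 2 / β) (u v : E) :
    ‖(u - α • g u) - (v - α • g v)‖ ≤ ‖u - v‖ := by
  have hco := cocoercive f g β hβ hdiff hconv hsmooth u v
  have expand : ‖(u - α • g u) - (v - α • g v)‖ ^ 2
      = ‖u - v‖ ^ 2 - 2 * α * ⟪g u - g v, u - v⟫ + α ^ 2 * ‖g u - g v‖ ^ 2 := by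
    have e : (u - α • g u) - (v - α • g v) = (u - v) - α • (g u - g v) := by
      rw [smul_sub]; abel
    rw [e, norm_sub_sq_real, real_inner_smul_right, norm_smul, Real.norm_eq_abs,
      abs_of_pos hα, mul_pow, real_inner_comm]
    ring
  have hαβ : α * β ≤ 2 := (le_div_iff₀ hβ).1 hα2
  have hip : 0 ≤ ⟪g u - g v, u - v⟫ := by nlinarith [sq_nonneg ‖g u - g v‖]
  have h1 : α ^ 2 * ‖g u - g v‖ ^ 2 ≤ α ^ 2 * (β * ⟪g u - g v, u - v⟫) :=
    mul_le_mul_of_nonneg_left hco (sq_nonneg α)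
  have h2 : α * β * (α * ⟪g u - g v, u - v⟫) ≤ 2 * (α * ⟪g u - g v, u - v⟫) :=
    mul_le_mul_of_nonneg_right hαβ (mul_nonneg hα.le hip)
  have hsq : ‖(u - α • g u) - (v - α • g v)‖ ^ 2 ≤ ‖u - v‖ ^ 2 := by
    rw [expand]; nlinarith [h1, h2]
  nlinarith [hsq, norm_nonneg ((u - α • g u) - (v - α • g v)), norm_nonneg (u - v)]

end Aux
section Helpers

variable {E : Type*} [NormedAddCommGroup E] [InnerProductSpace ℝ E]

lemma grad_norm_le (f : E → ℝ) (g : E → E) (L : ℝ) (hL : 0 ≤ L)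
    (hdiff : ∀ x, HasFDerivAt f ((innerSL ℝ) (g x)) x)
    (hLip : ∀ u v, |f u - f v| ≤ L * ‖u - v‖) (x : E) : ‖g x‖ ≤ L := by
  have hlip : LipschitzWith (Real.toNNReal L) f := by
    apply LipschitzWith.of_dist_le_mul
    intro u v
    rw [Real.dist_eq, dist_eq_norm]
    calc |f u - f v| ≤ L * ‖u - v‖ := hLip u v
      _ = (Real.toNNReal L : ℝ) * ‖u - v‖ := by rw [Real.coe_toNNReal L hL]
  have h := (hdiff x).le_of_lipschitz hlip
  rw [innerSL_apply_norm] at h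
  calc ‖g x‖ ≤ (Real.toNNReal L : ℝ) := h
    _ = L := Real.coe_toNNReal L hL

lemma sum_ite_eq_card (N M : ℕ) (t0 : Fin (M + 1)) (j : Fin N) (c : ℝ) :
    ∑ I : Fin (M + 1) → Fin N, (if I t0 = j then c else 0) = c * (N : ℝ) ^ M := by
  rw [← Equiv.sum_comp (Equiv.funSplitAt t0 (Fin N)).symm
    (fun I : Fin (M + 1) → Fin N => if I t0 = j then c else 0)]
  have happ : ∀ p : Fin N × ({ i // i ≠ t0 } → Fin N),
      ((Equiv.funSplitAt t0 (Fin N)).symm p) t0 = p.1 := by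
    intro p
    simp [Equiv.funSplitAt, Equiv.piSplitAt]
  have hcard : Fintype.card ({ i // i ≠ t0 } → Fin N) = N ^ M := by
    rw [Fintype.card_fun, Fintype.card_fin]
    congr 1
    have := Fintype.card_subtype_compl (fun i : Fin (M + 1) => i = t0)
    simp only [Fintype.card_subtype_eq, Fintype.card_fin] at this
    simpa using this
  calc ∑ p : Fin N × ({ i // i ≠ t0 } → Fin N),
        (if ((Equiv.funSplitAt t0 (Fin N)).symm p) t0 = j then c else 0)
      = ∑ p : Fin N × ({ i // i ≠ t0 } → Fin N), (if p.1 = j then c else 0) := by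
        refine Finset.sum_congr rfl fun p _ => by rw [happ p]
    _ = ∑ b : Fin N, ∑ _r : { i // i ≠ t0 } → Fin N, (if b = j then c else 0) :=
        Fintype.sum_prod_type _
    _ = ∑ b : Fin N, (N : ℝ) ^ M * (if b = j then c else 0) := by
        refine Finset.sum_congr rfl fun b _ => ?_
        rw [Finset.sum_const, nsmul_eq_mul]
        congr 1
        rw [Finset.card_univ, hcard]
        push_cast
        ring
    _ = c * (N : ℝ) ^ M := by
        simp [mul_ite, mul_zero, mul_comm]

lemma sum_prod_bool {k : ℕ} (q : Fin k → Bool → ℝ) :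
    ∑ m : Fin k → Bool, ∏ i, q i (m i) = ∏ i, (q i true + q i false) := by
  have h := Finset.prod_univ_sum (fun _ : Fin k => (Finset.univ : Finset Bool)) q
  rw [Fintype.piFinset_univ] at h
  rw [← h]
  exact Finset.prod_congr rfl fun i _ => by simp

lemma mask_marginal {k : ℕ} (s : Fin k → ℝ) (i0 : Fin k) :
    ∑ m : Fin k → Bool, (∏ i, if m i then s i else 1 - s i) * (if m i0 then (1 : ℝ) else 0)
      = s i0 := by
  have h : ∀ m : Fin k → Bool,
      (∏ i, if m i then s i else 1 - s i) * (if m i0 then (1 : ℝ) else 0)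
        = ∏ i, ((fun (i : Fin k) (b : Bool) =>
            (if b then s i else 1 - s i) * (if i = i0 then (if b then (1 : ℝ) else 0) else 1))
          i (m i)) := by
    intro m
    rw [Finset.prod_mul_distrib]
    congr 1
    rw [Finset.prod_ite_eq' Finset.univ i0 (fun i => if m i then (1 : ℝ) else 0)]
    simp
  rw [Finset.sum_congr rfl fun m _ => h m,
    sum_prod_bool (fun (i : Fin k) (b : Bool) =>
      (if b then s i else 1 - s i) * (if i = i0 then (if b then (1 : ℝ) else 0) else 1))]
  have : ∀ i : Fin k,
      ((fun (i : Fin k) (b : Bool) =>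
          (if b then s i else 1 - s i) * (if i = i0 then (if b then (1 : ℝ) else 0) else 1)) i true
        + (fun (i : Fin k) (b : Bool) =>
          (if b then s i else 1 - s i) * (if i = i0 then (if b then (1 : ℝ) else 0) else 1)) i false)
        = if i = i0 then s i else 1 := by
    intro i
    by_cases hi : i = i0 <;> simp [hi]
  rw [Finset.prod_congr rfl fun i _ => this i]
  rw [Finset.prod_ite_eq' Finset.univ i0 s]
  simp

end Helpers



/-- **Theorem 4.2 (uniform stability of SeWA, convex case).** Running SGD with constant step
size `0 < α ≤ 2/β` for `T` steps on neighbouring datasets `S, S'` (differing only at index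
`j`), for a convex, `L`-Lipschitz and `β`-smooth loss, the expectation over uniform index
sequences `I` and Bernoulli masks `m` of the selective-average loss difference is at most
`(2 α L² s / n) (T - k/2)`, where `s = max_i s i`. -/
theorem sewa_stability_convex
    {E : Type*} [NormedAddCommGroup E] [InnerProductSpace ℝ E]
    {Z : Type*} (F : E → Z → ℝ) (gradF : E → Z → E)
    (L β : ℝ) (hL : 0 < L) (hβ : 0 < β)
    (hdiff : ∀ (z : Z) (x : E), HasFDerivAt (fun u => F u z) ((innerSL ℝ) (gradF x z)) x)
    (hconv : ∀ z : Z, ConvexOn ℝ Set.univ (fun u => F u z))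
    (hLip : ∀ (z : Z) (u v : E), |F u z - F v z| ≤ L * ‖u - v‖)
    (hsmooth : ∀ (z : Z) (u v : E), ‖gradF u z - gradF v z‖ ≤ β * ‖u - v‖)
    (n : ℕ) (hn : 2 ≤ n) (S S' : Fin n → Z) (j : Fin n)
    (hSS' : ∀ i, i ≠ j → S i = S' i)
    (T k : ℕ) (hk : 1 ≤ k) (hkT : k ≤ T)
    (α : ℝ) (hα : 0 < α) (hα2 : α ≤ 2 / β)
    (w0 : E) (w w' : (Fin (T + 1) → Fin n) → ℕ → E)
    (hw1 : ∀ I, w I 1 = w0) (hw1' : ∀ I, w' I 1 = w0)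
    (hwrec : ∀ I, ∀ t, ∀ (h2 : 2 ≤ t) (hT' : t ≤ T),
      w I t = w I (t - 1) - α • gradF (w I (t - 1)) (S (I ⟨t, by omega⟩)))
    (hwrec' : ∀ I, ∀ t, ∀ (h2 : 2 ≤ t) (hT' : t ≤ T),
      w' I t = w' I (t - 1) - α • gradF (w' I (t - 1)) (S' (I ⟨t, by omega⟩)))
    (s : Fin k → ℝ) (hs : ∀ i, s i ∈ Set.Icc (0 : ℝ) 1)
    (z : Z) :
    ((1 : ℝ) / (n : ℝ) ^ (T + 1)) *
      ∑ I : Fin (T + 1) → Fin n,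
        ∑ m : Fin k → Bool,
          (∏ i, if m i then s i else 1 - s i) *
            |F (((1 : ℝ) / k) • ∑ i : Fin k, (if m i then (1 : ℝ) else 0) • w I (T - k + 1 + i)) z -
              F (((1 : ℝ) / k) • ∑ i : Fin k, (if m i then (1 : ℝ) else 0) • w' I (T - k + 1 + i)) z|
      ≤ (2 * α * L ^ 2 * (⨆ i, s i) / n) * ((T : ℝ) - (k : ℝ) / 2) := by
  classical
  have hgradL : ∀ (z : Z) (x : E), ‖gradF x z‖ ≤ L := fun z x =>
    grad_norm_le (fun u => F u z) (fun u => gradF u z) L hL.le (hdiff z) (hLip z) x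
  have hnonexp : ∀ (z : Z) (u v : E),
      ‖(u - α • gradF u z) - (v - α • gradF v z)‖ ≤ ‖u - v‖ := fun z u v =>
    step_nonexpansive (fun u => F u z) (fun u => gradF u z) β hβ (hdiff z) (hconv z)
      (hsmooth z) α hα hα2 u v
  have hT1 : 1 ≤ T := le_trans hk hkT
  have hnR : (0 : ℝ) < (n : ℝ) := by exact_mod_cast (by omega : 0 < n)
  have hkR : (0 : ℝ) < (k : ℝ) := by exact_mod_cast hk
  -- per-step bound
  have hstep : ∀ (I : Fin (T + 1) → Fin n) (t : ℕ) (h2 : 2 ≤ t) (hT' : t ≤ T),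
      ‖w I t - w' I t‖ ≤ ‖w I (t - 1) - w' I (t - 1)‖ +
        (if I ⟨t, by omega⟩ = j then 2 * α * L else 0) := by
    intro I t h2 hT'
    rw [hwrec I t h2 hT', hwrec' I t h2 hT']
    set u := w I (t - 1)
    set v := w' I (t - 1)
    by_cases hij : I ⟨t, by omega⟩ = j
    · rw [if_pos hij]
      set z1 := S (I ⟨t, by omega⟩) with hz1
      set z2 := S' (I ⟨t, by omega⟩) with hz2
      have hsplit : (u - α • gradF u z1) - (v - α • gradF v z2)
          = ((u - α • gradF u z1) - (v - α • gradF v z1)) + α • (gradF v z2 - gradF v z1) := by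
        rw [smul_sub]; abel
      calc ‖(u - α • gradF u z1) - (v - α • gradF v z2)‖
          ≤ ‖(u - α • gradF u z1) - (v - α • gradF v z1)‖
              + ‖α • (gradF v z2 - gradF v z1)‖ := by
            rw [hsplit]; exact norm_add_le _ _
        _ ≤ ‖u - v‖ + 2 * α * L := by
            have h5 : ‖α • (gradF v z2 - gradF v z1)‖ ≤ 2 * α * L := by
              rw [norm_smul, Real.norm_eq_abs, abs_of_pos hα]
              have h6 := norm_sub_le (gradF v z2) (gradF v z1)
              have g1 := hgradL z1 v
              have g2 := hgradL z2 v
              nlinarith [hα]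
            exact add_le_add (hnonexp z1 u v) h5
    · rw [if_neg hij, add_zero, hSS' _ hij]
      exact hnonexp _ u v
  -- expectation recursion
  have hD : ∀ t : ℕ, 1 ≤ t → t ≤ T →
      (∑ I : Fin (T + 1) → Fin n, ‖w I t - w' I t‖)
        ≤ ((t : ℝ) - 1) * (2 * α * L) * (n : ℝ) ^ T := by
    intro t
    induction t with
    | zero => omega
    | succ t ih =>
      intro h1 hT'
      by_cases ht1 : t = 0
      · subst ht1
        simp [hw1, hw1']
      · have h2 : 2 ≤ t + 1 := by omega
        have htT : t ≤ T := by omega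
        have ht1' : 1 ≤ t := by omega
        have hsum : (∑ I : Fin (T + 1) → Fin n, ‖w I (t + 1) - w' I (t + 1)‖)
            ≤ (∑ I : Fin (T + 1) → Fin n, ‖w I t - w' I t‖) + 2 * α * L * (n : ℝ) ^ T := by
          calc (∑ I : Fin (T + 1) → Fin n, ‖w I (t + 1) - w' I (t + 1)‖)
              ≤ ∑ I : Fin (T + 1) → Fin n, (‖w I t - w' I t‖ +
                  (if I ⟨t + 1, by omega⟩ = j then 2 * α * L else 0)) := by
                apply Finset.sum_le_sum
                intro I _
                have h7 := hstep I (t + 1) h2 hT'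
                simpa using h7
            _ = (∑ I : Fin (T + 1) → Fin n, ‖w I t - w' I t‖) +
                ∑ I : Fin (T + 1) → Fin n, (if I ⟨t + 1, by omega⟩ = j then 2 * α * L else 0) :=
                Finset.sum_add_distrib
            _ = (∑ I : Fin (T + 1) → Fin n, ‖w I t - w' I t‖) + 2 * α * L * (n : ℝ) ^ T := by
                rw [sum_ite_eq_card n T ⟨t + 1, by omega⟩ j (2 * α * L)]
        have h8 := ih ht1' htT
        push_cast
        push_cast at h8
        linarith [hsum, h8]
  -- supremum facts
  have hbdd : BddAbove (Set.range s) := (Set.finite_range s).bddAbove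
  have hsup : ∀ i, s i ≤ ⨆ i, s i := fun i => le_ciSup hbdd i
  have hsup0 : 0 ≤ ⨆ i, s i := le_trans (hs ⟨0, hk⟩).1 (hsup ⟨0, hk⟩)
  have hp : ∀ m : Fin k → Bool, 0 ≤ ∏ i, (if m i then s i else 1 - s i) := by
    intro m
    apply Finset.prod_nonneg
    intro i _
    have h2 := (hs i).1
    have h3 := (hs i).2
    rcases Bool.dichotomy (m i) with h | h <;> simp [h] <;> linarith
  -- inner (mask) bound for each I
  have hmaskI : ∀ I : Fin (T + 1) → Fin n,
      (∑ m : Fin k → Bool,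
        (∏ i, if m i then s i else 1 - s i) *
          |F (((1 : ℝ) / k) • ∑ i : Fin k, (if m i then (1 : ℝ) else 0) • w I (T - k + 1 + i)) z -
            F (((1 : ℝ) / k) • ∑ i : Fin k, (if m i then (1 : ℝ) else 0) • w' I (T - k + 1 + i)) z|)
        ≤ L / k * ∑ i : Fin k, s i * ‖w I (T - k + 1 + i) - w' I (T - k + 1 + i)‖ := by
    intro I
    have hm1 : ∀ m : Fin k → Bool,
        |F (((1 : ℝ) / k) • ∑ i : Fin k, (if m i then (1 : ℝ) else 0) • w I (T - k + 1 + i)) z -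
            F (((1 : ℝ) / k) • ∑ i : Fin k, (if m i then (1 : ℝ) else 0) • w' I (T - k + 1 + i)) z|
          ≤ L / k * ∑ i : Fin k, (if m i then (1 : ℝ) else 0) *
              ‖w I (T - k + 1 + i) - w' I (T - k + 1 + i)‖ := by
      intro m
      have hwd : (((1 : ℝ) / k) • ∑ i : Fin k, (if m i then (1 : ℝ) else 0) • w I (T - k + 1 + i))
          - (((1 : ℝ) / k) • ∑ i : Fin k, (if m i then (1 : ℝ) else 0) • w' I (T - k + 1 + i))
          = ((1 : ℝ) / k) • ∑ i : Fin k, (if m i then (1 : ℝ) else 0) •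
              (w I (T - k + 1 + i) - w' I (T - k + 1 + i)) := by
        rw [← smul_sub, ← Finset.sum_sub_distrib]
        congr 1
        exact Finset.sum_congr rfl fun i _ => (smul_sub _ _ _).symm
      have hnb : ‖(((1 : ℝ) / k) • ∑ i : Fin k, (if m i then (1 : ℝ) else 0) • w I (T - k + 1 + i))
          - (((1 : ℝ) / k) • ∑ i : Fin k, (if m i then (1 : ℝ) else 0) • w' I (T - k + 1 + i))‖
          ≤ (1 / k) * ∑ i : Fin k, (if m i then (1 : ℝ) else 0) *
              ‖w I (T - k + 1 + i) - w' I (T - k + 1 + i)‖ := by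
        rw [hwd, norm_smul, Real.norm_eq_abs, abs_of_nonneg (by positivity)]
        apply mul_le_mul_of_nonneg_left _ (by positivity)
        calc ‖∑ i : Fin k, (if m i then (1 : ℝ) else 0) •
                (w I (T - k + 1 + i) - w' I (T - k + 1 + i))‖
            ≤ ∑ i : Fin k, ‖(if m i then (1 : ℝ) else 0) •
                (w I (T - k + 1 + i) - w' I (T - k + 1 + i))‖ := norm_sum_le _ _
          _ = ∑ i : Fin k, (if m i then (1 : ℝ) else 0) *
                ‖w I (T - k + 1 + i) - w' I (T - k + 1 + i)‖ := by
              refine Finset.sum_congr rfl fun i _ => ?_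
              rw [norm_smul, Real.norm_eq_abs]
              by_cases h : m i <;> simp [h]
      calc |F (((1 : ℝ) / k) • ∑ i : Fin k, (if m i then (1 : ℝ) else 0) • w I (T - k + 1 + i)) z -
              F (((1 : ℝ) / k) • ∑ i : Fin k, (if m i then (1 : ℝ) else 0) • w' I (T - k + 1 + i)) z|
          ≤ L * ‖(((1 : ℝ) / k) • ∑ i : Fin k, (if m i then (1 : ℝ) else 0) • w I (T - k + 1 + i))
              - (((1 : ℝ) / k) • ∑ i : Fin k, (if m i then (1 : ℝ) else 0) • w' I (T - k + 1 + i))‖ :=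
            hLip z _ _
        _ ≤ L * ((1 / k) * ∑ i : Fin k, (if m i then (1 : ℝ) else 0) *
              ‖w I (T - k + 1 + i) - w' I (T - k + 1 + i)‖) :=
            mul_le_mul_of_nonneg_left hnb hL.le
        _ = L / k * ∑ i : Fin k, (if m i then (1 : ℝ) else 0) *
              ‖w I (T - k + 1 + i) - w' I (T - k + 1 + i)‖ := by ring
    calc (∑ m : Fin k → Bool,
        (∏ i, if m i then s i else 1 - s i) *
          |F (((1 : ℝ) / k) • ∑ i : Fin k, (if m i then (1 : ℝ) else 0) • w I (T - k + 1 + i)) z -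
            F (((1 : ℝ) / k) • ∑ i : Fin k, (if m i then (1 : ℝ) else 0) • w' I (T - k + 1 + i)) z|)
        ≤ ∑ m : Fin k → Bool,
            (∏ i, if m i then s i else 1 - s i) *
              (L / k * ∑ i : Fin k, (if m i then (1 : ℝ) else 0) *
                ‖w I (T - k + 1 + i) - w' I (T - k + 1 + i)‖) := by
          exact Finset.sum_le_sum fun m _ => mul_le_mul_of_nonneg_left (hm1 m) (hp m)
      _ = ∑ i : Fin k, ∑ m : Fin k → Bool,
            (L / k) * (((∏ i, if m i then s i else 1 - s i) * (if m i then (1 : ℝ) else 0)) *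
              ‖w I (T - k + 1 + i) - w' I (T - k + 1 + i)‖) := by
          rw [Finset.sum_comm]
          refine Finset.sum_congr rfl fun m _ => ?_
          rw [Finset.mul_sum, Finset.mul_sum]
          exact Finset.sum_congr rfl fun i _ => by ring
      _ = L / k * ∑ i : Fin k, s i * ‖w I (T - k + 1 + i) - w' I (T - k + 1 + i)‖ := by
          rw [Finset.mul_sum]
          refine Finset.sum_congr rfl fun i _ => ?_
          rw [← Finset.mul_sum, ← Finset.sum_mul, mask_marginal s i]
  -- final assembly
  have hPnn : (0 : ℝ) ≤ 1 / (n : ℝ) ^ (T + 1) := by positivity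
  calc ((1 : ℝ) / (n : ℝ) ^ (T + 1)) *
      ∑ I : Fin (T + 1) → Fin n,
        ∑ m : Fin k → Bool,
          (∏ i, if m i then s i else 1 - s i) *
            |F (((1 : ℝ) / k) • ∑ i : Fin k, (if m i then (1 : ℝ) else 0) • w I (T - k + 1 + i)) z -
              F (((1 : ℝ) / k) • ∑ i : Fin k, (if m i then (1 : ℝ) else 0) • w' I (T - k + 1 + i)) z|
      ≤ ((1 : ℝ) / (n : ℝ) ^ (T + 1)) *
          ∑ I : Fin (T + 1) → Fin n,
            (L / k * ∑ i : Fin k, s i * ‖w I (T - k + 1 + i) - w' I (T - k + 1 + i)‖) :=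
        mul_le_mul_of_nonneg_left (Finset.sum_le_sum fun I _ => hmaskI I) hPnn
    _ = ((1 : ℝ) / (n : ℝ) ^ (T + 1)) * (L / k) *
          ∑ i : Fin k, s i * ∑ I : Fin (T + 1) → Fin n,
            ‖w I (T - k + 1 + i) - w' I (T - k + 1 + i)‖ := by
        rw [← Finset.mul_sum, ← mul_assoc]
        congr 1
        rw [Finset.sum_comm]
        refine Finset.sum_congr rfl fun i _ => ?_
        rw [Finset.mul_sum]
    _ ≤ ((1 : ℝ) / (n : ℝ) ^ (T + 1)) * (L / k) *
          ∑ i : Fin k, (⨆ i, s i) *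
            ((((T : ℝ) - k + i) * (2 * α * L)) * (n : ℝ) ^ T) := by
        apply mul_le_mul_of_nonneg_left _ (by positivity)
        apply Finset.sum_le_sum
        intro i _
        have hi := i.isLt
        have hDi := hD (T - k + 1 + i) (by omega) (by omega)
        have hcast : ((T - k + 1 + (i : ℕ) : ℕ) : ℝ) - 1 = (T : ℝ) - k + i := by
          push_cast [Nat.cast_sub hkT]
          ring
        rw [hcast] at hDi
        have hDpos : (0 : ℝ) ≤ ∑ I : Fin (T + 1) → Fin n,
            ‖w I (T - k + 1 + i) - w' I (T - k + 1 + i)‖ :=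
          Finset.sum_nonneg fun _ _ => norm_nonneg _
        calc s i * ∑ I : Fin (T + 1) → Fin n, ‖w I (T - k + 1 + i) - w' I (T - k + 1 + i)‖
            ≤ (⨆ i, s i) * ∑ I : Fin (T + 1) → Fin n,
                ‖w I (T - k + 1 + i) - w' I (T - k + 1 + i)‖ :=
              mul_le_mul_of_nonneg_right (hsup i) hDpos
          _ ≤ (⨆ i, s i) * ((((T : ℝ) - k + i) * (2 * α * L)) * (n : ℝ) ^ T) := by
              apply mul_le_mul_of_nonneg_left _ hsup0
              exact hDi
    _ = (2 * α * L ^ 2 * (⨆ i, s i) / n) * ((T : ℝ) - ((k : ℝ) + 1) / 2) := by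
        have hgauss : ∑ i : Fin k, ((T : ℝ) - k + i)
            = (k : ℝ) * ((T : ℝ) - k) + (k : ℝ) * ((k : ℝ) - 1) / 2 := by
          rw [Finset.sum_add_distrib]
          have h1 : (∑ _i : Fin k, ((T : ℝ) - k)) = (k : ℝ) * ((T : ℝ) - k) := by
            rw [Finset.sum_const, Finset.card_univ, Fintype.card_fin, nsmul_eq_mul]
          have h2 : (∑ i : Fin k, ((i : ℕ) : ℝ)) = (k : ℝ) * ((k : ℝ) - 1) / 2 := by
            rw [Fin.sum_univ_eq_sum_range (fun i => (i : ℝ)) k]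
            have h3 := Finset.sum_range_id_mul_two k
            have h6 := congrArg (fun x : ℕ => (x : ℝ)) h3
            push_cast [Nat.cast_sub hk] at h6
            linarith [h6]
          rw [h1, h2]
        have hpull : ∑ i : Fin k, (⨆ i, s i) *
              ((((T : ℝ) - k + i) * (2 * α * L)) * (n : ℝ) ^ T)
            = (⨆ i, s i) * ((2 * α * L) * (n : ℝ) ^ T) *
                ((k : ℝ) * ((T : ℝ) - k) + (k : ℝ) * ((k : ℝ) - 1) / 2) := by
          rw [← hgauss, Finset.mul_sum]
          exact Finset.sum_congr rfl fun i _ => by ring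
        rw [hpull]
        have hn0 : (n : ℝ) ≠ 0 := ne_of_gt hnR
        have hk0 : (k : ℝ) ≠ 0 := ne_of_gt hkR
        have hnT0 : (n : ℝ) ^ T ≠ 0 := pow_ne_zero _ hn0
        field_simp
        ring
    _ ≤ (2 * α * L ^ 2 * (⨆ i, s i) / n) * ((T : ℝ) - (k : ℝ) / 2) := by
        have hC : (0 : ℝ) ≤ 2 * α * L ^ 2 * (⨆ i, s i) / n :=
          div_nonneg (mul_nonneg (by positivity) hsup0) hnR.le
        apply mul_le_mul_of_nonneg_left _ hC
        linarith [hkR]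
end

section
/- Let E be a real inner product space, β > 0, c > 0, and naturals k, T with 1 ≤ k ≤ T, and set α = c/T. Let w, w' : ℕ → E be two sequences such that ‖w'_{t+1} − w_{t+1}‖ ≤ (1 + αβ)‖w'_t − w_t‖ for every t with T − k + 1 ≤ t ≤ T − 1. Then ‖w'_T − w_T‖ ≤ e^{cβk/T} · δ̄_T, where δ̄_T = (1/k) Σ_{i=T−k+1}^T ‖w'_i − w_i‖. -/
/-- **Lemma C.1.** Let `α = c/T` and let `w, w'` be two sequences whose differences are
`(1 + αβ)`-expansive on the window `[T-k+1, T-1]`. Then the distance at the final iterate is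
at most `e^{cβk/T}` times the average distance over the last `k` iterates:
`‖w'_T - w_T‖ ≤ e^{cβk/T} δ̄_T` with `δ̄_T = (1/k) ∑_{i=T-k+1}^T ‖w'_i - w_i‖`. -/
theorem sewa_last_iterate_vs_average
    {E : Type*} [NormedAddCommGroup E] [InnerProductSpace ℝ E]
    (β c : ℝ) (hβ : 0 < β) (hc : 0 < c)
    (k T : ℕ) (hk : 1 ≤ k) (hkT : k ≤ T)
    (w w' : ℕ → E)
    (hexp : ∀ t : ℕ, T - k + 1 ≤ t → t ≤ T - 1 →
      ‖w' (t + 1) - w (t + 1)‖ ≤ (1 + (c / T) * β) * ‖w' t - w t‖) :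
    ‖w' T - w T‖ ≤
      Real.exp (c * β * k / T) *
        (((1 : ℝ) / k) * ∑ i : Fin k, ‖w' (T - k + 1 + i) - w (T - k + 1 + i)‖) := by
  have hT : 0 < T := lt_of_lt_of_le hk hkT
  have hTR : (0:ℝ) < (T:ℝ) := by exact_mod_cast hT
  set α : ℝ := c / T with hα
  have hα0 : 0 < α := div_pos hc hTR
  have hbase : (0:ℝ) ≤ 1 + α * β := by positivity
  have key : ∀ j, j ≤ k - 1 → ‖w' T - w T‖ ≤ (1 + α*β)^j * ‖w' (T-j) - w (T-j)‖ := by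
    intro j
    induction j with
    | zero => intro _; simp
    | succ n ih =>
      intro hj
      have h1 : T - n = (T - (n+1)) + 1 := by omega
      calc ‖w' T - w T‖ ≤ (1+α*β)^n * ‖w' (T-n) - w (T-n)‖ := ih (by omega)
        _ ≤ (1+α*β)^n * ((1+α*β) * ‖w' (T-(n+1)) - w (T-(n+1))‖) := by
            refine mul_le_mul_of_nonneg_left ?_ (pow_nonneg hbase n)
            rw [h1]
            exact hexp _ (by omega) (by omega)
        _ = (1+α*β)^(n+1) * ‖w' (T-(n+1)) - w (T-(n+1))‖ := by ring
  set X : ℝ := Real.exp (c * β * k / T) with hX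
  have hXpos : 0 < X := Real.exp_pos _
  have hpow : ∀ j, j ≤ k - 1 → ((1:ℝ)+α*β)^j ≤ X := by
    intro j hj
    calc ((1:ℝ)+α*β)^j ≤ (Real.exp (α*β))^j := by
          have := Real.add_one_le_exp (α*β)
          exact pow_le_pow_left₀ hbase (by linarith) j
      _ = Real.exp (α*β*j) := by rw [← Real.exp_nat_mul]; ring_nf
      _ ≤ X := by
          apply Real.exp_le_exp.2
          have hjk : (j:ℝ) ≤ (k:ℝ) := by exact_mod_cast (by omega : j ≤ k)
          have : α*β*j ≤ α*β*k := by
            apply mul_le_mul_of_nonneg_left hjk (by positivity)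
          calc α*β*(j:ℝ) ≤ α*β*k := this
            _ = c * β * k / T := by rw [hα]; ring
  have hterm : ∀ i : Fin k, ‖w' T - w T‖ / X ≤ ‖w' (T - k + 1 + i) - w (T - k + 1 + i)‖ := by
    intro i
    have hik : (i:ℕ) ≤ k - 1 := by omega
    have hj : k - 1 - (i:ℕ) ≤ k - 1 := by omega
    have heq : T - (k - 1 - (i:ℕ)) = T - k + 1 + i := by omega
    have h1 := key (k - 1 - (i:ℕ)) hj
    rw [heq] at h1
    rw [div_le_iff₀ hXpos]
    calc ‖w' T - w T‖ ≤ (1+α*β)^(k-1-(i:ℕ)) * ‖w' (T - k + 1 + i) - w (T - k + 1 + i)‖ := h1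
      _ ≤ X * ‖w' (T - k + 1 + i) - w (T - k + 1 + i)‖ := by
          apply mul_le_mul_of_nonneg_right (hpow _ hj) (norm_nonneg _)
      _ = ‖w' (T - k + 1 + i) - w (T - k + 1 + i)‖ * X := by ring
  have hsum : (k:ℝ) * (‖w' T - w T‖ / X) ≤
      ∑ i : Fin k, ‖w' (T - k + 1 + i) - w (T - k + 1 + i)‖ := by
    calc (k:ℝ) * (‖w' T - w T‖ / X) = ∑ _i : Fin k, ‖w' T - w T‖ / X := by
          simp [Finset.sum_const, mul_comm]
      _ ≤ _ := Finset.sum_le_sum fun i _ => hterm i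
  have hk0 : (0:ℝ) < (k:ℝ) := by exact_mod_cast hk
  rw [← div_le_iff₀' hXpos]
  rw [one_div, inv_mul_eq_div]
  exact (le_div_iff₀' hk0).2 hsum
end

section
/- Let a > 0 and b > 0 be reals, let t_0 and T be naturals with 1 ≤ t_0 < T, and let δ : ℕ → ℝ be a nonnegative sequence with δ_{t_0} = 0 and δ_t ≤ e^{a/t} δ_{t−1} + b/t for every t with t_0 < t ≤ T. Then δ_T ≤ (b/a) · (T/t_0)^a. -/
/-- **Recursion-unwinding estimate in the proof of Theorem 4.4.** If `δ` is a nonnegative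
sequence with `δ_{t₀} = 0` and `δ_t ≤ e^{a/t} δ_{t-1} + b/t` for `t₀ < t ≤ T`, then
`δ_T ≤ (b/a) (T/t₀)^a`. -/
theorem sewa_recursion_unwinding
    (a b : ℝ) (ha : 0 < a) (hb : 0 < b)
    (t₀ T : ℕ) (ht₀ : 1 ≤ t₀) (ht₀T : t₀ < T)
    (δ : ℕ → ℝ) (hδ : ∀ t, 0 ≤ δ t) (hδ0 : δ t₀ = 0)
    (hrec : ∀ t : ℕ, t₀ < t → t ≤ T → δ t ≤ Real.exp (a / t) * δ (t - 1) + b / t) :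
    δ T ≤ (b / a) * ((T : ℝ) / (t₀ : ℝ)) ^ a := by
  have ht₀R : (0:ℝ) < (t₀:ℝ) := by exact_mod_cast ht₀
  have hba : (0:ℝ) < b / a := div_pos hb ha
  have key : ∀ t : ℕ, t₀ ≤ t → t ≤ T →
      δ t ≤ (b / a) * (((t:ℝ) / (t₀:ℝ)) ^ a - 1) := by
    intro t ht
    induction t, ht using Nat.le_induction with
    | base =>
      intro _
      rw [hδ0, div_self ht₀R.ne', Real.one_rpow]
      simp
    | succ t htt ih =>
      intro hT
      have ht1 : (0:ℝ) < (t:ℝ) := lt_of_lt_of_le ht₀R (by exact_mod_cast htt)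
      have ht2 : (0:ℝ) < (t:ℝ) + 1 := by linarith
      have h1 : δ (t+1) ≤ Real.exp (a / ((t:ℝ)+1)) * δ t + b / ((t:ℝ)+1) := by
        have h := hrec (t+1) (by omega) hT
        have e1 : ((t+1 : ℕ) : ℝ) = (t:ℝ) + 1 := by push_cast; ring
        simpa [e1] using h
      set c := Real.exp (a / ((t:ℝ)+1)) with hc
      have hc0 : (0:ℝ) < c := Real.exp_pos _
      -- log (t/(t+1)) ≤ t/(t+1) - 1 = -1/(t+1)
      have hlog : (1:ℝ)/((t:ℝ)+1) ≤ Real.log (((t:ℝ)+1)/t) := by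
        have h := Real.log_le_sub_one_of_pos (div_pos ht1 ht2)
        have hrw : Real.log ((t:ℝ)/((t:ℝ)+1)) = - Real.log (((t:ℝ)+1)/t) := by
          rw [← Real.log_inv]
          congr 1
          field_simp
        rw [hrw] at h
        have : (t:ℝ)/((t:ℝ)+1) - 1 = -(1/((t:ℝ)+1)) := by field_simp; ring
        linarith [this ▸ h]
      -- c ≤ ((t+1)/t)^a
      have hcr : c ≤ (((t:ℝ)+1)/t) ^ a := by
        rw [Real.rpow_def_of_pos (div_pos ht2 ht1)]
        apply Real.exp_le_exp.mpr
        rw [div_eq_mul_one_div a ((t:ℝ)+1)]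
        have := mul_le_mul_of_nonneg_left hlog ha.le
        linarith
      -- c * (t/t₀)^a ≤ ((t+1)/t₀)^a
      have hr0 : (0:ℝ) ≤ ((t:ℝ)/(t₀:ℝ)) ^ a :=
        Real.rpow_nonneg (by positivity) a
    -- product identity
      have hprod : (((t:ℝ)+1)/t) ^ a * ((t:ℝ)/(t₀:ℝ)) ^ a = (((t:ℝ)+1)/(t₀:ℝ)) ^ a := by
        rw [← Real.mul_rpow (by positivity) (by positivity)]
        congr 1
        field_simp
      have hcr2 : c * ((t:ℝ)/(t₀:ℝ)) ^ a ≤ (((t:ℝ)+1)/(t₀:ℝ)) ^ a := by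
        calc c * ((t:ℝ)/(t₀:ℝ)) ^ a ≤ (((t:ℝ)+1)/t) ^ a * ((t:ℝ)/(t₀:ℝ)) ^ a :=
              mul_le_mul_of_nonneg_right hcr hr0
          _ = (((t:ℝ)+1)/(t₀:ℝ)) ^ a := hprod
      -- 1 + a/(t+1) ≤ c
      have hc1 : 1 + a/((t:ℝ)+1) ≤ c := by
        have := Real.add_one_le_exp (a/((t:ℝ)+1))
        linarith
      have hIH : δ t ≤ (b/a) * (((t:ℝ)/(t₀:ℝ)) ^ a - 1) := ih (by omega)
      have hδt : (0:ℝ) ≤ δ t := hδ t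
      have hb1 : b / ((t:ℝ)+1) = (b/a) * (a/((t:ℝ)+1)) := by
        field_simp
      have e1 : ((t+1 : ℕ) : ℝ) = (t:ℝ) + 1 := by push_cast; ring
      rw [e1]
      have step : c * δ t + b/((t:ℝ)+1) ≤ (b/a) * ((((t:ℝ)+1)/(t₀:ℝ)) ^ a - 1) := by
        have h2 : c * δ t ≤ c * ((b/a) * (((t:ℝ)/(t₀:ℝ)) ^ a - 1)) :=
          mul_le_mul_of_nonneg_left hIH hc0.le
        nlinarith [mul_le_mul_of_nonneg_left hcr2 hba.le,
          mul_le_mul_of_nonneg_left hc1 hba.le]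
      linarith [h1]
  have hfin := key T (le_of_lt ht₀T) le_rfl
  have : (b/a) * (((T:ℝ)/(t₀:ℝ)) ^ a - 1) ≤ (b/a) * ((T:ℝ)/(t₀:ℝ)) ^ a := by
    nlinarith
  linarith
end
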